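/- Suppose y = Ax + e where x ∈ ℝ^N is s-sparse. Let T be an index set with |T| = t, let x' ∈ ℝ^N satisfy y = Ax' exactly, and let μ' be the feedback of x', i.e., μ'_T = x'_T + (A_Tᵀ A_T)^{-1} A_Tᵀ A_{T^c} x'_{T^c} and μ'_{T^c} = 0. If δ_{s+t} < 1, then ‖x - μ'‖₂ ≤ √(1+δ_t)‖e‖₂/(1-δ_{s+t}) + ‖x_{T^c}‖₂/√(1-δ_{s+t}²). -/

import Mathlib

open Matrix Finset Real MeasureTheory ProbabilityTheory
open scoped BigOperators

noncomputable section

/-- squared Euclidean norm -/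
def nsq {n : ℕ} (v : Fin n → ℝ) : ℝ := ∑ i, v i ^ 2

/-- Euclidean norm -/
def nrm {n : ℕ} (v : Fin n → ℝ) : ℝ := Real.sqrt (∑ i, v i ^ 2)

open Classical in
/-- support of a vector, as a finset -/
def suppF {n : ℕ} (x : Fin n → ℝ) : Finset (Fin n) :=
  Finset.univ.filter (fun i => x i ≠ 0)

/-- `x` is `s`-sparse -/
def Sparse {n : ℕ} (s : ℕ) (x : Fin n → ℝ) : Prop := (suppF x).card ≤ s

/-- `δ` is a restricted isometry constant of order `t` for `A`:
`(1-δ)‖x‖² ≤ ‖Ax‖² ≤ (1+δ)‖x‖²` for all `t`-sparse `x`. -/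
def IsRIP {M N : ℕ} (A : Matrix (Fin M) (Fin N) ℝ) (t : ℕ) (δ : ℝ) : Prop :=
  ∀ x : Fin N → ℝ, Sparse t x →
    (1 - δ) * nsq x ≤ nsq (A.mulVec x) ∧ nsq (A.mulVec x) ≤ (1 + δ) * nsq x

/-- restriction of a vector to an index set (zeroing entries outside it) -/
def restr {n : ℕ} (T : Finset (Fin n)) (x : Fin n → ℝ) : Fin n → ℝ :=
  fun i => if i ∈ T then x i else 0

/-- submatrix of the columns of `A` indexed by `T` -/
def colSub {M N : ℕ} (A : Matrix (Fin M) (Fin N) ℝ) (T : Finset (Fin N)) :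
    Matrix (Fin M) T ℝ :=
  fun i j => A i j.val

/-- the feedback step: `μ'_T = x_T + (A_Tᵀ A_T)⁻¹ A_Tᵀ A_{Tᶜ} x_{Tᶜ}`, `μ'_{Tᶜ} = 0`. -/
def feedback {M N : ℕ} (A : Matrix (Fin M) (Fin N) ℝ) (T : Finset (Fin N))
    (x : Fin N → ℝ) : Fin N → ℝ :=
  fun i => if h : i ∈ T then
    x i + ((((colSub A T)ᵀ * colSub A T)⁻¹ * (colSub A T)ᵀ).mulVec
      (A.mulVec (restr Tᶜ x))) ⟨i, h⟩
  else 0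

/-- `hatAbs x k` is the `k`-th largest absolute entry of `x` (1-based index). -/
def hatAbs {n : ℕ} (x : Fin n → ℝ) (k : ℕ) : ℝ :=
  if h : k - 1 < n then |x (Tuple.sort (fun i => -|x i|) ⟨k - 1, h⟩)| else 0

/-- `T` contains the indices of the `p` largest absolute entries of `x`. -/
def containsTop {n : ℕ} (x : Fin n → ℝ) (p : ℕ) (T : Finset (Fin n)) : Prop :=
  ∀ j : Fin n, (j : ℕ) < p → Tuple.sort (fun i => -|x i|) j ∈ T

/-- The NST+HT+FB algorithm: `T k` is the set of the `s` largest absolute entries of the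
feasible iterate `x^k`, `μ^k` is the thresholding-plus-feedback of `x^k` on `T k`, and
`x^{k+1} = μ^k + Aᵀ(AAᵀ)⁻¹(y - Aμ^k)` is the null space tuning step. -/
def NSTSpec {M N : ℕ} (A : Matrix (Fin M) (Fin N) ℝ) (y : Fin M → ℝ) (s : ℕ)
    (T : ℕ → Finset (Fin N)) (xs μ : ℕ → Fin N → ℝ) : Prop :=
  (∀ k, A.mulVec (xs k) = y) ∧
  (∀ k, (T k).card = s) ∧
  (∀ k, ∀ i ∈ T k, ∀ j ∉ T k, |xs k j| ≤ |xs k i|) ∧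
  (∀ k, μ k = feedback A (T k) (xs k)) ∧
  (∀ k, xs (k + 1) = μ k + (Aᵀ * (A * Aᵀ)⁻¹).mulVec (y - A.mulVec (μ k)))

/-- The adaptive AdptNST+HT+FB algorithm: identical to NST+HT+FB except that at step `k`
the index set `T k` consists of the `k` largest absolute entries of `x^k`. -/
def AdptSpec {M N : ℕ} (A : Matrix (Fin M) (Fin N) ℝ) (y : Fin M → ℝ)
    (T : ℕ → Finset (Fin N)) (xs μ : ℕ → Fin N → ℝ) : Prop :=
  (∀ k, A.mulVec (xs k) = y) ∧
  (∀ k, (T k).card = k) ∧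
  (∀ k, ∀ i ∈ T k, ∀ j ∉ T k, |xs k j| ≤ |xs k i|) ∧
  (∀ k, μ k = feedback A (T k) (xs k)) ∧
  (∀ k, xs (k + 1) = μ k + (Aᵀ * (A * Aᵀ)⁻¹).mulVec (y - A.mulVec (μ k)))

/-!
By feasibility the feedback of `x'` is the least-squares solution `lsqOn A T y` of `A w = y`
over vectors supported in `T`, and it is linear in `y = A x + e`; so `x - μ'` splits as
`(x - lsqOn A T (A x)) - lsqOn A T e`.

Since `A (lsqOn A T e)` is the orthogonal projection of `e` onto the range of `A_T`,
`(1 - δ_{s+t}) ‖μ‖² ≤ ‖A μ‖² = ⟨A μ, e⟩ ≤ √(1 + δ_t) ‖μ‖ ‖e‖` for `μ = lsqOn A T e`.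

For `z = x - lsqOn A T (A x) = u + x_{Tᶜ}` with `u = z_T`, the normal equations give
`⟨A u, A z⟩ = 0` while `⟨u, z⟩ = ‖u‖²`. Polarizing the RIP on the `(s+t)`-sparse vectors
`λ u ± z` gives `2 λ ‖u‖² ≤ δ (λ² ‖u‖² + ‖z‖²)` for all `λ`, hence `‖u‖² ≤ δ² ‖z‖²`, which is
`(1 - δ²) ‖z‖² ≤ ‖x_{Tᶜ}‖²`.
-/

section Vectors

variable {n : ℕ}

lemma nsq_eq_dotProduct (v : Fin n → ℝ) : nsq v = v ⬝ᵥ v := by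
  simp only [nsq, dotProduct, sq]

lemma nsq_nonneg (v : Fin n → ℝ) : 0 ≤ nsq v :=
  Finset.sum_nonneg fun _ _ => sq_nonneg _

lemma nrm_eq_sqrt_nsq (v : Fin n → ℝ) : nrm v = √(nsq v) := rfl

lemma nrm_sq (v : Fin n → ℝ) : nrm v ^ 2 = nsq v :=
  Real.sq_sqrt (nsq_nonneg v)

lemma nrm_nonneg (v : Fin n → ℝ) : 0 ≤ nrm v := Real.sqrt_nonneg _

lemma nrm_eq_norm (v : Fin n → ℝ) :
    nrm v = ‖(WithLp.toLp 2 v : EuclideanSpace ℝ (Fin n))‖ := by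
  simp [nrm, EuclideanSpace.norm_eq]

lemma nrm_sub_le (u v : Fin n → ℝ) : nrm (u - v) ≤ nrm u + nrm v := by
  simpa only [nrm_eq_norm, WithLp.toLp_sub] using norm_sub_le _ _

lemma dotProduct_le_nrm_mul_nrm (u v : Fin n → ℝ) : u ⬝ᵥ v ≤ nrm u * nrm v := by
  simpa [nrm_eq_norm, EuclideanSpace.inner_eq_star_dotProduct, dotProduct_comm] using
    real_inner_le_norm (WithLp.toLp 2 u : EuclideanSpace ℝ (Fin n)) (WithLp.toLp 2 v)

lemma sparse_of_support_subset {r : ℕ} {w : Fin n → ℝ} {S : Finset (Fin n)}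
    (hS : S.card ≤ r) (hw : ∀ i ∉ S, w i = 0) : Sparse r w := by
  refine le_trans (Finset.card_le_card fun i hi => ?_) hS
  by_contra h
  simp [suppF, hw i h] at hi

lemma restr_dotProduct_restr_compl (T : Finset (Fin n)) (u v : Fin n → ℝ) :
    restr T u ⬝ᵥ restr Tᶜ v = 0 :=
  Finset.sum_eq_zero fun i _ => by by_cases h : i ∈ T <;> simp [restr, h]

lemma restr_add_restr_compl (T : Finset (Fin n)) (v : Fin n → ℝ) :
    restr T v + restr Tᶜ v = v := by
  funext i
  by_cases h : i ∈ T <;> simp [restr, h]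

lemma IsRIP.two_mul_dotProduct_sub_le {M N r : ℕ} {A : Matrix (Fin M) (Fin N) ℝ} {δ : ℝ}
    (hA : IsRIP A r δ) {u z : Fin N → ℝ} (hadd : Sparse r (u + z)) (hsub : Sparse r (u - z)) :
    2 * (u ⬝ᵥ z - A *ᵥ u ⬝ᵥ A *ᵥ z) ≤ δ * (nsq u + nsq z) := by
  have hlow := (hA _ hadd).1
  have hup := (hA _ hsub).2
  simp only [nsq_eq_dotProduct, mulVec_add, mulVec_sub, dotProduct_add, add_dotProduct,
    dotProduct_sub, sub_dotProduct, dotProduct_comm z u, dotProduct_comm (A *ᵥ z)] at *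
  linarith

end Vectors

section LeastSquares

variable {M N : ℕ}

def lsqOn (A : Matrix (Fin M) (Fin N) ℝ) (T : Finset (Fin N)) (c : Fin M → ℝ) :
    Fin N → ℝ :=
  fun i => if h : i ∈ T then
    ((((colSub A T)ᵀ * colSub A T)⁻¹ * (colSub A T)ᵀ) *ᵥ c) ⟨i, h⟩
  else 0

variable (A : Matrix (Fin M) (Fin N) ℝ) (T : Finset (Fin N))

lemma lsqOn_apply_of_notMem (c : Fin M → ℝ) {i : Fin N} (hi : i ∉ T) :
    lsqOn A T c i = 0 := by
  simp [lsqOn, hi]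

lemma lsqOn_add (c d : Fin M → ℝ) : lsqOn A T (c + d) = lsqOn A T c + lsqOn A T d := by
  funext i
  by_cases h : i ∈ T <;> simp [lsqOn, h, mulVec_add]

lemma mulVec_eq_colSub_mulVec {w : Fin N → ℝ} (hw : ∀ i ∉ T, w i = 0) :
    A *ᵥ w = colSub A T *ᵥ fun j => w j := by
  funext k
  simp only [mulVec, dotProduct, colSub]
  rw [← Finset.sum_subset (Finset.subset_univ T) fun i _ hi => by simp [hw i hi],
    ← Finset.sum_attach T, Finset.univ_eq_attach]

lemma lsqOn_apply_coe (c : Fin M → ℝ) (j : T) :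
    lsqOn A T c j = ((((colSub A T)ᵀ * colSub A T)⁻¹ * (colSub A T)ᵀ) *ᵥ c) j := by
  simp [lsqOn, j.2]

lemma mulVec_lsqOn (c : Fin M → ℝ) :
    A *ᵥ lsqOn A T c =
      colSub A T *ᵥ ((((colSub A T)ᵀ * colSub A T)⁻¹ * (colSub A T)ᵀ) *ᵥ c) := by
  rw [mulVec_eq_colSub_mulVec A T fun i hi => lsqOn_apply_of_notMem A T c hi]
  simp only [lsqOn_apply_coe]

variable {A T}

lemma mulVec_dotProduct_sub_mulVec_lsqOn_eq_zero
    (hG : IsUnit ((colSub A T)ᵀ * colSub A T).det) (c : Fin M → ℝ) {w : Fin N → ℝ}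
    (hw : ∀ i ∉ T, w i = 0) :
    A *ᵥ w ⬝ᵥ (c - A *ᵥ lsqOn A T c) = 0 := by
  have hnormal : (colSub A T)ᵀ *ᵥ (c - A *ᵥ lsqOn A T c) = 0 := by
    rw [mulVec_lsqOn, mulVec_sub, mulVec_mulVec, mulVec_mulVec,
      mul_nonsing_inv_cancel_left _ _ hG, sub_self]
  rw [mulVec_eq_colSub_mulVec A T hw, dotProduct_comm, dotProduct_mulVec,
    ← mulVec_transpose, hnormal, zero_dotProduct]

lemma lsqOn_mulVec (hG : IsUnit ((colSub A T)ᵀ * colSub A T).det)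
    {w : Fin N → ℝ} (hw : ∀ i ∉ T, w i = 0) : lsqOn A T (A *ᵥ w) = w := by
  funext i
  by_cases h : i ∈ T
  · rw [lsqOn_apply_coe A T _ ⟨i, h⟩, mulVec_eq_colSub_mulVec A T hw, mulVec_mulVec,
      Matrix.mul_assoc, nonsing_inv_mul _ hG, one_mulVec]
  · rw [lsqOn_apply_of_notMem A T _ h, hw i h]

lemma feedback_eq_lsqOn (hG : IsUnit ((colSub A T)ᵀ * colSub A T).det) (x : Fin N → ℝ) :
    feedback A T x = lsqOn A T (A *ᵥ x) := by
  have hT : restr T x = lsqOn A T (A *ᵥ restr T x) :=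
    (lsqOn_mulVec hG fun i hi => by simp [restr, hi]).symm
  have hsplit : feedback A T x = restr T x + lsqOn A T (A *ᵥ restr Tᶜ x) := by
    funext i
    by_cases h : i ∈ T <;> simp [feedback, lsqOn, restr, h]
  rw [hsplit, hT, ← lsqOn_add, ← mulVec_add, restr_add_restr_compl]

end LeastSquares

lemma IsRIP.isUnit_det_gram {M N r : ℕ} {A : Matrix (Fin M) (Fin N) ℝ} {δ : ℝ}
    (hA : IsRIP A r δ) (hδ : δ < 1) {T : Finset (Fin N)} (hT : T.card ≤ r) :
    IsUnit ((colSub A T)ᵀ * colSub A T).det := by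
  refine (PosDef.det_pos ?_).ne'.isUnit
  refine posDef_iff_dotProduct_mulVec.mpr
    ⟨by simpa using isHermitian_conjTranspose_mul_self (colSub A T), fun v hv => ?_⟩
  set w : Fin N → ℝ := fun i => if h : i ∈ T then v ⟨i, h⟩ else 0
  have hw : ∀ i ∉ T, w i = 0 := fun i hi => dif_neg hi
  have hwv : (fun j : T => w j) = v := funext fun j => dif_pos j.2
  have hAw : colSub A T *ᵥ v = A *ᵥ w := by rw [mulVec_eq_colSub_mulVec A T hw, hwv]
  have hw0 : w ≠ 0 := fun h => hv (by rw [← hwv, h]; rfl)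
  have hpos : 0 < nsq w :=
    (nsq_nonneg w).lt_of_ne' (by rwa [nsq_eq_dotProduct, Ne, dotProduct_self_eq_zero])
  calc 0 < (1 - δ) * nsq w := mul_pos (by linarith) hpos
    _ ≤ nsq (A *ᵥ w) := (hA w (sparse_of_support_subset hT hw)).1
    _ = star v ⬝ᵥ ((colSub A T)ᵀ * colSub A T) *ᵥ v := by
      rw [star_trivial, ← mulVec_mulVec, dotProduct_mulVec, vecMul_transpose, hAw,
        nsq_eq_dotProduct]

lemma le_sq_mul_of_forall_two_mul_le {W Z δ : ℝ} (hW : 0 ≤ W) (hZ : 0 ≤ Z)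
    (h : ∀ l : ℝ, 2 * l * W ≤ δ * (l ^ 2 * W + Z)) : W ≤ δ ^ 2 * Z := by
  have hdisc : discrim (δ * W) (-2 * W) (δ * Z) ≤ 0 :=
    discrim_le_zero fun l => by nlinarith [h l]
  rw [discrim] at hdisc
  rcases hW.eq_or_lt with rfl | hW
  · positivity
  · nlinarith

lemma sqrt_le_sqrt_div_sqrt_one_sub_sq {Z V δ : ℝ} (hZ : 0 ≤ Z) (hδ : δ < 1)
    (hδZ : 0 ≤ δ * Z) (h : (1 - δ ^ 2) * Z ≤ V) : √Z ≤ √V / √(1 - δ ^ 2) := by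
  rcases lt_or_ge 0 (1 - δ ^ 2) with hpos | hle
  · rw [le_div_iff₀ (Real.sqrt_pos.mpr hpos), ← Real.sqrt_mul hZ]
    exact Real.sqrt_le_sqrt (by linarith)
  · have hZ0 : Z = 0 := by nlinarith
    rw [hZ0, Real.sqrt_zero]
    positivity

section ErrorBounds

variable {M N : ℕ} {A : Matrix (Fin M) (Fin N) ℝ} {T : Finset (Fin N)}

lemma nrm_sub_lsqOn_mulVec_le {s t : ℕ} {δ : ℝ} (hA : IsRIP A (s + t) δ) (hδ : δ < 1)
    {x : Fin N → ℝ} (hx : Sparse s x) (hT : T.card ≤ t) :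
    nrm (x - lsqOn A T (A *ᵥ x)) ≤ nrm (restr Tᶜ x) / √(1 - δ ^ 2) := by
  have hG := hA.isUnit_det_gram hδ (hT.trans (Nat.le_add_left t s))
  set z := x - lsqOn A T (A *ᵥ x)
  set u := restr T z
  set v := restr Tᶜ x
  have hzuv : z = u + v := by
    funext i
    by_cases h : i ∈ T <;> simp [z, u, v, restr, h, lsqOn_apply_of_notMem]
  have hu : ∀ i ∉ T, u i = 0 := fun i hi => if_neg hi
  have hS : (T ∪ suppF x).card ≤ s + t := by
    have := Finset.card_union_le T (suppF x)
    unfold Sparse at hx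
    omega
  have hzS : ∀ i ∉ T ∪ suppF x, z i = 0 := fun i hi => by
    simp only [Finset.mem_union, not_or] at hi
    simp [z, lsqOn_apply_of_notMem A T _ hi.1, by simpa [suppF] using hi.2]
  have hcomb : ∀ l ε : ℝ, Sparse (s + t) (l • u + ε • z) := fun l ε =>
    sparse_of_support_subset hS fun i hi => by
      simp [hu i (fun h => hi (Finset.mem_union_left _ h)), hzS i hi]
  have horth : A *ᵥ u ⬝ᵥ A *ᵥ z = 0 := by
    simpa only [z, mulVec_sub] using
      mulVec_dotProduct_sub_mulVec_lsqOn_eq_zero hG (A *ᵥ x) hu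
  have huz : u ⬝ᵥ z = nsq u := by
    rw [hzuv, dotProduct_add, restr_dotProduct_restr_compl, add_zero, nsq_eq_dotProduct]
  have hpol : ∀ l : ℝ, 2 * l * nsq u ≤ δ * (l ^ 2 * nsq u + nsq z) := fun l => by
    have := hA.two_mul_dotProduct_sub_le (u := l • u) (z := z)
      (by simpa using hcomb l 1) (by simpa [sub_eq_add_neg] using hcomb l (-1))
    simpa [mulVec_smul, horth, huz, nsq_eq_dotProduct, mul_assoc, sq] using this
  have hu_le := le_sq_mul_of_forall_two_mul_le (nsq_nonneg u) (nsq_nonneg z) hpol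
  have hZ : nsq z = nsq u + nsq v := by
    rw [hzuv, nsq_eq_dotProduct, nsq_eq_dotProduct, nsq_eq_dotProduct, dotProduct_add,
      add_dotProduct, add_dotProduct, restr_dotProduct_restr_compl, dotProduct_comm v,
      restr_dotProduct_restr_compl]
    ring
  have hδz : 0 ≤ δ * nsq z := by
    have := hA z (by simpa using hcomb 0 1)
    linarith [this.1, this.2]
  exact sqrt_le_sqrt_div_sqrt_one_sub_sq (nsq_nonneg z) hδ hδz
    (show (1 - δ ^ 2) * nsq z ≤ nsq v by linarith)

lemma nrm_lsqOn_le {r t : ℕ} {δ δ' : ℝ} (hA : IsRIP A r δ) (hA' : IsRIP A t δ') (hδ : δ < 1)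
    (hT : T.card ≤ t) (htr : t ≤ r) (e : Fin M → ℝ) :
    nrm (lsqOn A T e) ≤ √(1 + δ') * nrm e / (1 - δ) := by
  have hG := hA.isUnit_det_gram hδ (hT.trans htr)
  set μ := lsqOn A T e
  have hμ : ∀ i ∉ T, μ i = 0 := fun i hi => lsqOn_apply_of_notMem A T e hi
  have hlow := (hA μ (sparse_of_support_subset (hT.trans htr) hμ)).1
  have hup := (hA' μ (sparse_of_support_subset hT hμ)).2
  have hAμ : nrm (A *ᵥ μ) ≤ √(1 + δ') * nrm μ := by
    rw [nrm_eq_sqrt_nsq, nrm_eq_sqrt_nsq, ← Real.sqrt_mul' _ (nsq_nonneg μ)]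
    exact Real.sqrt_le_sqrt hup
  have hproj : nsq (A *ᵥ μ) = A *ᵥ μ ⬝ᵥ e := by
    have := mulVec_dotProduct_sub_mulVec_lsqOn_eq_zero hG e hμ
    rw [dotProduct_sub, sub_eq_zero] at this
    rw [nsq_eq_dotProduct, this]
  have key : (1 - δ) * nrm μ * nrm μ ≤ √(1 + δ') * nrm e * nrm μ :=
    calc (1 - δ) * nrm μ * nrm μ = (1 - δ) * nsq μ := by rw [← nrm_sq]; ring
      _ ≤ A *ᵥ μ ⬝ᵥ e := hproj ▸ hlow
      _ ≤ nrm (A *ᵥ μ) * nrm e := dotProduct_le_nrm_mul_nrm _ _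
      _ ≤ √(1 + δ') * nrm μ * nrm e := by gcongr; exact nrm_nonneg e
      _ = √(1 + δ') * nrm e * nrm μ := by ring
  rw [le_div_iff₀ (by linarith)]
  rcases (nrm_nonneg μ).eq_or_lt with h0 | hpos
  · rw [← h0, zero_mul]
    exact mul_nonneg (Real.sqrt_nonneg _) (nrm_nonneg e)
  · linarith [le_of_mul_le_mul_right key hpos]

end ErrorBounds

/-- feedback error bound (Lemma `lemm6` of the paper). -/
theorem stmt5 {M N : ℕ} (A : Matrix (Fin M) (Fin N) ℝ)
    (s t : ℕ) (x x' : Fin N → ℝ) (e : Fin M → ℝ) (y : Fin M → ℝ)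
    (hx : Sparse s x) (hy : y = A.mulVec x + e)
    (T : Finset (Fin N)) (hT : T.card = t)
    (hfeas : A.mulVec x' = y)
    (δst δt : ℝ) (h1 : IsRIP A (s + t) δst) (h2 : IsRIP A t δt)
    (hlt : δst < 1) :
    nrm (x - feedback A T x') ≤
      Real.sqrt (1 + δt) * nrm e / (1 - δst) +
        nrm (restr Tᶜ x) / Real.sqrt (1 - δst ^ 2) := by
  have hG := h1.isUnit_det_gram hlt (hT.le.trans (Nat.le_add_left t s))
  have hsplit : x - feedback A T x' = (x - lsqOn A T (A *ᵥ x)) - lsqOn A T e := by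
    rw [feedback_eq_lsqOn hG, hfeas, hy, lsqOn_add]
    abel
  rw [hsplit, add_comm]
  exact (nrm_sub_le _ _).trans (add_le_add (nrm_sub_lsqOn_mulVec_le h1 hlt hx hT.le)
    (nrm_lsqOn_le h1 h2 hlt hT.le (Nat.le_add_left t s) e))
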